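/- Let Γ be a graph on a set X such that some sequence of finite sets a_n ⊆ X yields a strictly decreasing sequence of sets Γ(a_n). Then, using Ramsey's theorem, Γ contains a vertex-induced subgraph isomorphic to a variation of the half graph or of the three-quarter graph. -/
import Mathlib


def VariationEmbedding {X : Type*} (Γ : X → X → Prop) (cross : ℕ → ℕ → Prop) : Prop :=
  ∃ (x y : ℕ → X) (b₀ b₁ : Bool),
    Function.Injective x ∧ Function.Injective y ∧ (∀ n m, x n ≠ y m) ∧
    (∀ n m, n ≠ m → (Γ (x n) (x m) ↔ b₀ = true)) ∧
    (∀ n m, n ≠ m → (Γ (y n) (y m) ↔ b₁ = true)) ∧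
    (∀ n m, Γ (x n) (y m) ↔ cross n m)

def nbhd {X : Type*} (Γ : X → X → Prop) (x : X) : Set X := {y | y = x ∨ Γ x y}

def nbhdF {X : Type*} (Γ : X → X → Prop) (a : Finset X) : Set X := ⋂ x ∈ a, nbhd Γ x

private lemma inf_pigeon {κ : Type*} [Finite κ] {S : Set ℕ} (hS : S.Infinite) (f : ℕ → κ) :
    ∃ k, {n | n ∈ S ∧ f n = k}.Infinite := by
  have := hS.to_subtype
  obtain ⟨k, hk⟩ := Finite.exists_infinite_fiber (fun n : S => f n)
  refine ⟨k, ?_⟩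
  have h1 : ((fun n : S => f n) ⁻¹' {k} : Set S).Infinite := Set.infinite_coe_iff.mp hk
  have himg : ((Subtype.val : S → ℕ) '' ((fun n : S => f n) ⁻¹' {k})).Infinite :=
    h1.image (Subtype.val_injective.injOn)
  apply himg.mono
  rintro n ⟨⟨m, hm⟩, hfm, rfl⟩
  exact ⟨hm, hfm⟩

/-- Infinite Ramsey theorem for pairs with finitely many colors. -/
private lemma ramsey_pairs {κ : Type*} [Finite κ] (c : ℕ → ℕ → κ) :
    ∃ (g : ℕ → ℕ) (k : κ), StrictMono g ∧ ∀ i j, i < j → c (g i) (g j) = k := by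
  classical
  have key : ∀ S : Set ℕ, S.Infinite → ∃ p : ℕ × Set ℕ, p.1 ∈ S ∧ p.2.Infinite ∧ p.2 ⊆ S ∧
      (∀ m ∈ p.2, p.1 < m) ∧ ∀ m ∈ p.2, ∀ m' ∈ p.2, c p.1 m = c p.1 m' := by
    intro S hS
    obtain ⟨n, hn⟩ := hS.nonempty
    have hS' : {m | m ∈ S ∧ n < m}.Infinite := by
      apply (hS.diff (Set.finite_Iic n)).mono
      intro m hm
      exact ⟨hm.1, by simpa using hm.2⟩
    obtain ⟨k, hk⟩ := inf_pigeon hS' (c n)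
    refine ⟨⟨n, {m | (m ∈ S ∧ n < m) ∧ c n m = k}⟩, hn, hk, fun m hm => hm.1.1,
      fun m hm => hm.1.2, fun m hm m' hm' => hm.2.trans hm'.2.symm⟩
  choose F h1 h2 h3 h4 h5 using key
  let step : {S : Set ℕ // S.Infinite} → {S : Set ℕ // S.Infinite} :=
    fun p => ⟨(F p.1 p.2).2, h2 p.1 p.2⟩
  let st : ℕ → {S : Set ℕ // S.Infinite} := fun n => step^[n] ⟨Set.univ, Set.infinite_univ⟩
  have hst : ∀ n, st (n + 1) = step (st n) := by
    intro n
    simp only [st, Function.iterate_succ_apply']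
  let g0 : ℕ → ℕ := fun n => (F (st n).1 (st n).2).1
  have hmem : ∀ n, g0 n ∈ (st n).1 := fun n => h1 (st n).1 (st n).2
  have hsub : ∀ n, (st (n + 1)).1 ⊆ (st n).1 := by
    intro n
    rw [hst n]
    exact h3 (st n).1 (st n).2
  have hmono : ∀ i j, i ≤ j → (st j).1 ⊆ (st i).1 := by
    intro i j hij
    induction j, hij using Nat.le_induction with
    | base => exact le_refl _
    | succ j hij ih => exact (hsub j).trans ih
  have hlt : ∀ n m, m ∈ (st (n + 1)).1 → g0 n < m := by
    intro n m hm
    rw [hst n] at hm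
    exact h4 (st n).1 (st n).2 m hm
  have hcol : ∀ n, ∀ m ∈ (st (n + 1)).1, ∀ m' ∈ (st (n + 1)).1, c (g0 n) m = c (g0 n) m' := by
    intro n m hm m' hm'
    rw [hst n] at hm hm'
    exact h5 (st n).1 (st n).2 m hm m' hm'
  have hmem' : ∀ i j, i < j → g0 j ∈ (st (i + 1)).1 := fun i j hij => hmono (i + 1) j hij (hmem j)
  have hg0 : StrictMono g0 := fun i j hij => hlt i (g0 j) (hmem' i j hij)
  set d : ℕ → κ := fun i => c (g0 i) (g0 (i + 1)) with hd
  have hcd : ∀ i j, i < j → c (g0 i) (g0 j) = d i := fun i j hij =>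
    hcol i (g0 j) (hmem' i j hij) (g0 (i + 1)) (hmem' i (i + 1) (Nat.lt_succ_self i))
  obtain ⟨k, hk⟩ := inf_pigeon (Set.infinite_univ (α := ℕ)) d
  have hI : {n | n ∈ Set.univ ∧ d n = k}.Infinite := hk
  have : Infinite ↥{n | n ∈ Set.univ ∧ d n = k} := hI.to_subtype
  let e := Nat.orderEmbeddingOfSet {n | n ∈ Set.univ ∧ d n = k}
  have he : ∀ n, e n ∈ {n | n ∈ Set.univ ∧ d n = k} := by
    intro n
    have : e n ∈ Set.range e := ⟨n, rfl⟩
    rwa [Nat.orderEmbeddingOfSet_range] at this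
  refine ⟨g0 ∘ e, k, hg0.comp e.strictMono, fun i j hij => ?_⟩
  simp only [Function.comp]
  rw [hcd (e i) (e j) (e.strictMono hij)]
  exact (he i).2

theorem strictly_decreasing_gives_variation
    {X : Type*} (Γ : X → X → Prop) (hsym : Symmetric Γ)
    (a : ℕ → Finset X)
    (hdec : ∀ n, nbhdF Γ (a (n + 1)) ⊂ nbhdF Γ (a n)) :
    VariationEmbedding Γ (fun n m => m < n) ∨ VariationEmbedding Γ (fun n m => m ≠ n) := by
  classical
  -- pick witnesses
  have hw : ∀ n, ∃ y, y ∈ nbhdF Γ (a n) ∧ y ∉ nbhdF Γ (a (n + 1)) :=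
    fun n => Set.exists_of_ssubset (hdec n)
  choose Y hY1 hY2 using hw
  have hu : ∀ n, ∃ u ∈ a (n + 1), Y n ∉ nbhd Γ u := by
    intro n
    by_contra h
    push_neg at h
    exact hY2 n (Set.mem_iInter₂.mpr h)
  choose U hU1 hU2 using hu
  -- antitone
  have hanti : ∀ m n : ℕ, m ≤ n → nbhdF Γ (a n) ⊆ nbhdF Γ (a m) := by
    intro m n hmn
    induction n, hmn using Nat.le_induction with
    | base => exact le_refl _
    | succ n hmn ih => exact ((hdec n).subset).trans ih
  have hdiag : ∀ n, ¬(Y n = U n ∨ Γ (U n) (Y n)) := fun n => hU2 n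
  have hcross : ∀ m n, m < n → Y n = U m ∨ Γ (U m) (Y n) := by
    intro m n hmn
    have : Y n ∈ nbhdF Γ (a (m + 1)) := hanti (m + 1) n hmn (hY1 n)
    exact Set.mem_iInter₂.mp this (U m) (hU1 m)
  -- Ramsey coloring
  let c : ℕ → ℕ → Bool × Bool × Bool × Bool × Bool × Bool × Bool := fun i j =>
    (decide (Γ (U i) (U j)), decide (Γ (Y i) (Y j)), decide (Γ (U j) (Y i)),
     decide (U i = U j), decide (Y i = Y j), decide (U j = Y i), decide (U i = Y j))
  obtain ⟨g, ⟨k1, k2, k3, k4, k5, k6, k7⟩, hg, hk⟩ := ramsey_pairs c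
  have hk1 : ∀ i j, i < j → (Γ (U (g i)) (U (g j)) ↔ k1 = true) := by
    intro i j hij
    have := congrArg (·.1) (hk i j hij)
    simp only at this
    rw [← this, decide_eq_true_eq]
  have hk2 : ∀ i j, i < j → (Γ (Y (g i)) (Y (g j)) ↔ k2 = true) := by
    intro i j hij
    have := congrArg (·.2.1) (hk i j hij)
    simp only at this
    rw [← this, decide_eq_true_eq]
  have hk3 : ∀ i j, i < j → (Γ (U (g j)) (Y (g i)) ↔ k3 = true) := by
    intro i j hij
    have := congrArg (·.2.2.1) (hk i j hij)
    simp only at this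
    rw [← this, decide_eq_true_eq]
  have hk4 : ∀ i j, i < j → (U (g i) = U (g j) ↔ k4 = true) := by
    intro i j hij
    have := congrArg (·.2.2.2.1) (hk i j hij)
    simp only at this
    rw [← this, decide_eq_true_eq]
  have hk5 : ∀ i j, i < j → (Y (g i) = Y (g j) ↔ k5 = true) := by
    intro i j hij
    have := congrArg (·.2.2.2.2.1) (hk i j hij)
    simp only at this
    rw [← this, decide_eq_true_eq]
  have hk6 : ∀ i j, i < j → (U (g j) = Y (g i) ↔ k6 = true) := by
    intro i j hij
    have := congrArg (·.2.2.2.2.2.1) (hk i j hij)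
    simp only at this
    rw [← this, decide_eq_true_eq]
  have hk7 : ∀ i j, i < j → (U (g i) = Y (g j) ↔ k7 = true) := by
    intro i j hij
    have := congrArg (·.2.2.2.2.2.2) (hk i j hij)
    simp only at this
    rw [← this, decide_eq_true_eq]
  -- (A) U injective along g
  have hUne : ∀ i j, i < j → U (g i) ≠ U (g j) := by
    intro i j hij heq
    rcases hcross (g i) (g j) (hg hij) with h | h
    · exact hdiag (g j) (Or.inl (heq ▸ h))
    · exact hdiag (g j) (Or.inr (heq ▸ h))
  -- (B) Y injective along g
  have hYne : ∀ i j, i < j → Y (g i) ≠ Y (g j) := by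
    intro i j hij heq
    rcases hcross (g i) (g j) (hg hij) with h | h
    · exact hdiag (g i) (Or.inl (heq.symm ▸ h))
    · exact hdiag (g i) (Or.inr (heq.symm ▸ h))
  -- (C) k6 = false
  have hk6f : k6 = false := by
    by_contra h
    have h6 : k6 = true := by cases k6 <;> simp_all
    have e1 : U (g 1) = Y (g 0) := (hk6 0 1 one_pos).mpr h6
    have e2 : U (g 2) = Y (g 0) := (hk6 0 2 two_pos).mpr h6
    exact hUne 1 2 one_lt_two (e1.trans e2.symm)
  -- (D) k7 = false
  have hk7f : k7 = false := by
    by_contra h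
    have h7 : k7 = true := by cases k7 <;> simp_all
    have e1 : U (g 0) = Y (g 1) := (hk7 0 1 one_pos).mpr h7
    have e2 : U (g 0) = Y (g 2) := (hk7 0 2 two_pos).mpr h7
    exact hYne 1 2 one_lt_two (e1.symm.trans e2)
  -- (E) forced edges
  have hforced : ∀ i j, i < j → Γ (U (g i)) (Y (g j)) := by
    intro i j hij
    rcases hcross (g i) (g j) (hg hij) with h | h
    · exact absurd ((hk7 i j hij).mp h.symm) (by simp [hk7f])
    · exact h
  -- diagonal non-edges
  have hdiagΓ : ∀ i, ¬ Γ (U (g i)) (Y (g i)) := fun i h => hdiag (g i) (Or.inr h)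
  have hdiagne : ∀ i, Y (g i) ≠ U (g i) := fun i h => hdiag (g i) (Or.inl h)
  -- assemble the embedding: x := Y ∘ g, y := U ∘ g
  have hmain : ∀ (cr : ℕ → ℕ → Prop),
      (∀ n m, Γ (U (g m)) (Y (g n)) ↔ cr n m) → VariationEmbedding Γ cr := by
    intro cr hcr
    refine ⟨fun n => Y (g n), fun n => U (g n), k2, k1, ?_, ?_, ?_, ?_, ?_, ?_⟩
    · intro i j hij
      by_contra hne
      rcases lt_or_gt_of_ne hne with h | h
      · exact hYne i j h hij
      · exact hYne j i h hij.symm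
    · intro i j hij
      by_contra hne
      rcases lt_or_gt_of_ne hne with h | h
      · exact hUne i j h hij
      · exact hUne j i h hij.symm
    · intro n m heq
      rcases lt_trichotomy n m with h | rfl | h
      · exact absurd ((hk6 n m h).mp heq.symm) (by simp [hk6f])
      · exact hdiagne n heq
      · exact absurd ((hk7 m n h).mp heq.symm) (by simp [hk7f])
    · intro n m hnm
      rcases lt_or_gt_of_ne hnm with h | h
      · exact hk2 n m h
      · exact ⟨fun hΓ => (hk2 m n h).mp (hsym hΓ), fun hb => hsym ((hk2 m n h).mpr hb)⟩
    · intro n m hnm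
      rcases lt_or_gt_of_ne hnm with h | h
      · exact hk1 n m h
      · exact ⟨fun hΓ => (hk1 m n h).mp (hsym hΓ), fun hb => hsym ((hk1 m n h).mpr hb)⟩
    · intro n m
      constructor
      · intro hΓ
        exact (hcr n m).mp (hsym hΓ)
      · intro hc
        exact hsym ((hcr n m).mpr hc)
  cases hk3eq : k3 with
  | false =>
    left
    apply hmain
    intro n m
    constructor
    · intro hΓ
      rcases lt_trichotomy m n with h | heq | h
      · exact h
      · rw [heq] at hΓ
        exact absurd hΓ (hdiagΓ n)
      · exact absurd ((hk3 n m h).mp hΓ) (by simp [hk3eq])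
    · intro h
      exact hforced m n h
  | true =>
    right
    apply hmain
    intro n m
    constructor
    · intro hΓ hmn
      rw [hmn] at hΓ
      exact hdiagΓ n hΓ
    · intro h
      rcases lt_or_gt_of_ne h with h | h
      · exact hforced m n h
      · exact (hk3 n m h).mpr hk3eq
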